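/- arXiv:2210.09195 — 4 statements merged into one kernel-verified Lean document; each statement's English description precedes it below -/
import Mathlib

section
/- Let X be a set and F a vector space of real-valued functions on X of positive finite dimension m. Suppose F is closed under the absolute-value operation ψ ↦ |ψ|. Suppose also there is an m-argument operation Π sending any ψ₁,…,ψ_m ∈ F to a function Π(ψ₁,…,ψ_m) ∈ F which is nonnegative and has exactly the same zero set as the product ψ₁⋯ψ_m. Then there exist a proper subset X₀ of X, a partition {X₁,…,X_m} of X∖X₀, and a basis χ₁,…,χ_m of F such that for each j, χ_j > 0 on X_j and χ_j = 0 on X∖X_j. -/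
/-!
Since the evaluation functionals span the dual of `F`, there are points `x₁, …, x_m` at which
evaluation is a basis of the dual; the predual basis `χ` of `F` satisfies `χ_j(x_i) = δ_ij`, and
every `ψ ∈ F` expands as `ψ = ∑ ψ(x_i) χ_i`. Applied to `|χ_j| ∈ F` this gives `|χ_j| = χ_j`,
and applied to `|χ_j - χ_k| ∈ F` it gives `|χ_j - χ_k| = χ_j + χ_k`, so the nonnegative `χ_j`
have disjoint supports. The pieces are the supports `{χ_j > 0}` and `X₀` is the common zero set,
which misses the points `x_i`.
-/

open Module

def Module.Basis.IsLagrangeAt {K X ι : Type*} [CommRing K] [DecidableEq ι]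
    {F : Submodule K (X → K)} (c : Basis ι K F) (x : ι → X) : Prop :=
  ∀ i j, (c j : X → K) (x i) = if i = j then 1 else 0

theorem Submodule.exists_basis_isLagrangeAt {K X : Type*} [Field K]
    (F : Submodule K (X → K)) [FiniteDimensional K F] :
    ∃ (c : Basis (Fin (finrank K F)) K F) (x : Fin (finrank K F) → X), c.IsLagrangeAt x := by
  let ε : X → Dual K F := fun y => (LinearMap.proj y).comp F.subtype
  have hspan : span K (Set.range ε) = ⊤ :=
    span_eq_top_of_ne_zero fun v hv => by
      obtain ⟨y, hy⟩ := Function.ne_iff.mp (Subtype.coe_injective.ne hv)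
      exact ⟨ε y, ⟨y, rfl⟩, hy⟩
  let b₀ := Basis.ofSpan hspan.ge
  let b := b₀.reindex
    (b₀.indexEquiv (finBasisOfFinrankEq K (Dual K F) Subspace.dual_finrank_eq))
  have hb : ∀ i, b i ∈ Set.range ε := fun i =>
    Basis.ofSpan_subset hspan.ge (b₀.reindex_apply _ i ▸ Set.mem_range_self _)
  choose x hx using hb
  refine ⟨b.dualBasis.map (evalEquiv K F).symm, x, fun i j => ?_⟩
  calc ((b.dualBasis.map (evalEquiv K F).symm j : F) : X → K) (x i)
      = b i ((evalEquiv K F).symm (b.dualBasis j)) := by rw [← hx i]; rfl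
    _ = b.dualBasis j (b i) := apply_evalEquiv_symm_apply K F _ _
    _ = if i = j then 1 else 0 := b.dualBasis_apply_self j i

namespace Module.Basis.IsLagrangeAt

variable {K X ι : Type*} [CommRing K] [DecidableEq ι] {F : Submodule K (X → K)}
  {c : Basis ι K F} {x : ι → X}

theorem repr_apply (hc : c.IsLagrangeAt x) (v : F) (i : ι) :
    c.repr v i = (v : X → K) (x i) := by
  have : c.coord i = (LinearMap.proj (x i)).comp F.subtype :=
    c.ext fun j => by simp [hc i j, Finsupp.single_apply, eq_comm]
  exact LinearMap.congr_fun this v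

theorem apply_eq_sum [Fintype ι] (hc : c.IsLagrangeAt x) (v : F) (y : X) :
    (v : X → K) y = ∑ i, (v : X → K) (x i) * (c i : X → K) y := by
  conv_lhs => rw [← c.sum_repr v]
  simp [hc.repr_apply]

variable [LinearOrder K] [Fintype ι]

theorem abs_apply_eq_sum (hc : c.IsLagrangeAt x) (habs : ∀ ψ ∈ F, (fun y => |ψ y|) ∈ F)
    (v : F) (y : X) : |(v : X → K) y| = ∑ i, |(v : X → K) (x i)| * (c i : X → K) y :=
  hc.apply_eq_sum ⟨_, habs v v.2⟩ y

variable [IsStrictOrderedRing K]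

theorem apply_nonneg (hc : c.IsLagrangeAt x) (habs : ∀ ψ ∈ F, (fun y => |ψ y|) ∈ F)
    (j : ι) (y : X) : 0 ≤ (c j : X → K) y := by
  have h := hc.abs_apply_eq_sum habs (c j) y
  simp only [fun i => hc i j, apply_ite, abs_one, abs_zero, ite_mul, one_mul, zero_mul,
    Finset.sum_ite_eq', Finset.mem_univ, if_true] at h
  exact h ▸ abs_nonneg _

theorem apply_mul_apply_eq_zero (hc : c.IsLagrangeAt x)
    (habs : ∀ ψ ∈ F, (fun y => |ψ y|) ∈ F) {j k : ι} (hjk : j ≠ k) (y : X) :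
    (c j : X → K) y * (c k : X → K) y = 0 := by
  have h := hc.abs_apply_eq_sum habs (c j - c k) y
  have hcoeff : ∀ i, |(c j : X → K) (x i) - (c k : X → K) (x i)| =
      (if i = j then 1 else 0) + (if i = k then 1 else 0) := fun i => by
    rw [hc i j, hc i k]
    split_ifs <;> simp_all
  simp only [Submodule.coe_sub, Pi.sub_apply, hcoeff, add_mul, ite_mul, one_mul, zero_mul,
    Finset.sum_add_distrib, Finset.sum_ite_eq', Finset.mem_univ, if_true] at h
  have hj := hc.apply_nonneg habs j y
  have hk := hc.apply_nonneg habs k y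
  rcases abs_cases ((c j : X → K) y - (c k : X → K) y) with ⟨h', -⟩ | ⟨h', -⟩ <;>
    nlinarith

end Module.Basis.IsLagrangeAt

section Supports

variable {K X ι : Type*} [Semiring K] [PartialOrder K] {f : ι → X → K}

theorem pairwise_disjoint_setOf_pos_of_mul_eq_zero [IsStrictOrderedRing K]
    (hf : ∀ j k, j ≠ k → ∀ y, f j y * f k y = 0) :
    Pairwise (Function.onFun Disjoint fun j => {y | 0 < f j y}) :=
  fun j k hjk => Set.disjoint_left.mpr fun y hj hk =>
    (mul_pos hj hk).ne' (hf j k hjk y)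

theorem iUnion_setOf_pos_eq_diff_setOf_forall_eq_zero (hf : ∀ j y, 0 ≤ f j y) :
    ⋃ j, {y | 0 < f j y} = Set.univ \ {y | ∀ j, f j y = 0} := by
  ext y
  simp only [Set.mem_iUnion, Set.mem_ofPred_eq, Set.mem_sdiff, Set.mem_univ, true_and,
    not_forall]
  exact exists_congr fun j => (hf j y).lt_iff_ne'

end Supports

theorem stmt0_general {X : Type*} (m : ℕ) (hm : 0 < m)
    (F : Submodule ℝ (X → ℝ)) (hdim : Module.finrank ℝ F = m)
    (habs : ∀ ψ ∈ F, (fun x => |ψ x|) ∈ F) :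
    ∃ (X₀ : Set X) (Xs : Fin m → Set X) (χ : Fin m → (X → ℝ)),
      X₀ ≠ Set.univ ∧
      (∀ j, (Xs j).Nonempty) ∧
      Pairwise (Function.onFun Disjoint Xs) ∧
      (⋃ j, Xs j) = Set.univ \ X₀ ∧
      (∀ j, χ j ∈ F) ∧
      LinearIndependent ℝ χ ∧
      Submodule.span ℝ (Set.range χ) = F ∧
      (∀ j, (∀ x ∈ Xs j, 0 < χ j x) ∧ (∀ x ∉ Xs j, χ j x = 0)) := by
  subst hdim
  have : FiniteDimensional ℝ F := .of_finrank_pos hm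
  obtain ⟨c, x, hc⟩ := F.exists_basis_isLagrangeAt
  have hnonneg := hc.apply_nonneg habs
  have hnode : ∀ j, (c j : X → ℝ) (x j) = 1 := fun j => by simp [hc j j]
  refine ⟨{y | ∀ j, (c j : X → ℝ) y = 0}, fun j => {y | 0 < (c j : X → ℝ) y},
    fun j => c j, ?_, fun j => ⟨x j, by simp [hnode]⟩,
    pairwise_disjoint_setOf_pos_of_mul_eq_zero fun j k hjk =>
      hc.apply_mul_apply_eq_zero habs hjk,
    iUnion_setOf_pos_eq_diff_setOf_forall_eq_zero hnonneg, fun j => (c j).2,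
    c.linearIndependent.map' F.subtype F.ker_subtype, ?_,
    fun j => ⟨fun _ => id, fun y hy => le_antisymm (not_lt.mp hy) (hnonneg j y)⟩⟩
  · exact (Set.ne_univ_iff_exists_notMem _).mpr
      ⟨x ⟨0, hm⟩, fun h => one_ne_zero ((hnode _).symm.trans (h ⟨0, hm⟩))⟩
  · rw [show (fun j => (c j : X → ℝ)) = F.subtype ∘ c from rfl, Set.range_comp,
      Submodule.span_image, c.span_eq, Submodule.map_top, Submodule.range_subtype]

/-- Lemma 1.3 (basis lemma): if a finite-dimensional space `F` of functions `X → ℝ`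
is closed under absolute value and under an `m`-argument operation `P` producing
nonnegative functions with the same zeros as the product, then there is a proper
subset `X₀`, a partition of `X ∖ X₀`, and a basis of `F` positive on the pieces. -/
theorem stmt0 {X : Type*} (m : ℕ) (hm : 0 < m)
    (F : Submodule ℝ (X → ℝ)) (hdim : Module.finrank ℝ F = m)
    (habs : ∀ ψ ∈ F, (fun x => |ψ x|) ∈ F)
    (P : (Fin m → (X → ℝ)) → (X → ℝ))
    (hPmem : ∀ ψ : Fin m → (X → ℝ), (∀ j, ψ j ∈ F) → P ψ ∈ F)
    (hPnonneg : ∀ ψ : Fin m → (X → ℝ), (∀ j, ψ j ∈ F) → ∀ x, 0 ≤ P ψ x)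
    (hPzero : ∀ ψ : Fin m → (X → ℝ), (∀ j, ψ j ∈ F) →
      ∀ x, P ψ x = 0 ↔ (∏ j, ψ j x) = 0) :
    ∃ (X₀ : Set X) (Xs : Fin m → Set X) (χ : Fin m → (X → ℝ)),
      X₀ ≠ Set.univ ∧
      (∀ j, (Xs j).Nonempty) ∧
      Pairwise (Function.onFun Disjoint Xs) ∧
      (⋃ j, Xs j) = Set.univ \ X₀ ∧
      (∀ j, χ j ∈ F) ∧
      LinearIndependent ℝ χ ∧
      Submodule.span ℝ (Set.range χ) = F ∧
      (∀ j, (∀ x ∈ Xs j, 0 < χ j x) ∧ (∀ x ∉ Xs j, χ j x = 0)) :=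
  stmt0_general m hm F hdim habs
end

section
/- Let V be a finite-dimensional real vector space equipped with a nondegenerate symmetric bilinear form ⟨·,·⟩, and let A : V → V be a nonzero ⟨·,·⟩-self-adjoint linear endomorphism. If there exist a real number q with q > 0, q ≠ 1, and a linear isometry B of (V,⟨·,·⟩) such that B A B⁻¹ = q² A, then A is nilpotent. -/
/-!
Conjugation by `B` shows that `A` and `q² • A` have the same characteristic polynomial `p`.
Scaling an endomorphism by `c` scales the roots of its characteristic polynomial by `c`, so
`p.scaleRoots (q²) = p`, i.e. `q^(2(n - i)) aᵢ = aᵢ` for every coefficient `aᵢ` of `p`.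
As `q²` is not a root of unity, every coefficient below the leading one vanishes:
`p = X ^ n`, which is nilpotency of `A`.
-/

open Polynomial

lemma Polynomial.Monic.eq_X_pow_of_scaleRoots_eq {R : Type*} [CommRing R] [NoZeroDivisors R]
    {p : R[X]} (hp : p.Monic) {c : R} (hc : ∀ n ≠ 0, c ^ n ≠ 1) (h : p.scaleRoots c = p) :
    p = X ^ p.natDegree := by
  ext i
  rcases lt_trichotomy i p.natDegree with hi | rfl | hi
  · have hcoeff : p.coeff i * c ^ (p.natDegree - i) = p.coeff i := by
      rw [← coeff_scaleRoots, h]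
    have hpow : c ^ (p.natDegree - i) - 1 ≠ 0 := sub_ne_zero.2 (hc _ (by omega))
    have hzero : p.coeff i * (c ^ (p.natDegree - i) - 1) = 0 := by
      rw [mul_sub, mul_one, hcoeff, sub_self]
    rw [coeff_X_pow, if_neg hi.ne, (mul_eq_zero.1 hzero).resolve_right hpow]
  · rw [coeff_X_pow_self]
    exact hp.coeff_natDegree
  · rw [coeff_X_pow, if_neg hi.ne', coeff_eq_zero_of_natDegree_lt hi]

lemma LinearMap.charpoly_smul {K V : Type*} [Field K] [Infinite K] [AddCommGroup V]
    [Module K V] [FiniteDimensional K V] (f : Module.End K V) (c : K) :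
    (c • f).charpoly = f.charpoly.scaleRoots c := by
  rcases eq_or_ne c 0 with rfl | hc
  · simp [f.charpoly_monic.leadingCoeff, f.charpoly_natDegree]
  refine Polynomial.funext fun t => ?_
  calc (c • f).charpoly.eval t
      = (c • (algebraMap K _ (t / c) - f)).det := by
        rw [eval_charpoly, smul_sub, Algebra.smul_def c (algebraMap K _ (t / c)), ← map_mul,
          mul_div_cancel₀ t hc]
    _ = c ^ f.charpoly.natDegree * f.charpoly.eval (t / c) := by
        rw [det_smul, eval_charpoly, f.charpoly_natDegree]
    _ = (f.charpoly.scaleRoots c).eval t := by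
        rw [← scaleRoots_eval_mul, mul_div_cancel₀ t hc]

lemma Module.End.isNilpotent_of_conj_eq_smul {K V : Type*} [Field K] [Infinite K]
    [AddCommGroup V] [Module K V] [FiniteDimensional K V] {f : Module.End K V}
    {c : K} (hc : ∀ n ≠ 0, c ^ n ≠ 1) (e : V ≃ₗ[K] V) (hf : e.conj f = c • f) :
    IsNilpotent f := by
  have hscale : f.charpoly.scaleRoots c = f.charpoly := by
    rw [← LinearMap.charpoly_smul, ← hf, LinearEquiv.charpoly_conj]
  rw [LinearMap.isNilpotent_iff_charpoly, ← f.charpoly_natDegree]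
  exact f.charpoly_monic.eq_X_pow_of_scaleRoots_eq hc hscale

theorem stmt6_general {V : Type*} [AddCommGroup V] [Module ℝ V] [FiniteDimensional ℝ V]
    (A : V →ₗ[ℝ] V)
    (q : ℝ) (hq : 0 < q) (hq1 : q ≠ 1)
    (B : V ≃ₗ[ℝ] V)
    (hconj : B.toLinearMap ∘ₗ A ∘ₗ B.symm.toLinearMap = q ^ 2 • A) :
    IsNilpotent A := by
  refine Module.End.isNilpotent_of_conj_eq_smul (c := q ^ 2) (fun n hn h => hq1 ?_) B hconj
  rw [← pow_mul] at h
  exact (pow_eq_one_iff_of_nonneg hq.le (by omega)).1 h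

/-- If a nonzero self-adjoint endomorphism `A` of a finite-dimensional real vector
space with a nondegenerate symmetric bilinear form satisfies `B A B⁻¹ = q² A` for
some isometry `B` and some `q > 0`, `q ≠ 1`, then `A` is nilpotent. -/
theorem stmt6 {V : Type*} [AddCommGroup V] [Module ℝ V] [FiniteDimensional ℝ V]
    (Φ : LinearMap.BilinForm ℝ V) (hΦnd : Φ.Nondegenerate) (hΦsymm : Φ.IsSymm)
    (A : V →ₗ[ℝ] V) (hA : A ≠ 0)
    (hsa : ∀ v w, Φ (A v) w = Φ v (A w))
    (q : ℝ) (hq : 0 < q) (hq1 : q ≠ 1)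
    (B : V ≃ₗ[ℝ] V) (hBiso : ∀ v w, Φ (B v) (B w) = Φ v w)
    (hconj : B.toLinearMap ∘ₗ A ∘ₗ B.symm.toLinearMap = q ^ 2 • A) :
    IsNilpotent A :=
  stmt6_general A q hq hq1 B hconj
end

section
/- Let f : I → ℝ be a nonconstant C² function on an open interval I with f(t) ≠ 0 for all t, and suppose (|f|^{-1/2})'' = 0 on I. Then there exist real constants ε ≠ 0 and b with b ∉ I such that f(t) = ε (t−b)^{−2} for all t ∈ I. -/
/-!
Put `g = |f|^{-1/2}`. Since `g'' = 0` on the interval `I`, `g t = a t + c` there, and `g > 0`, so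
`|f t| = (a t + c)⁻²`. A continuous nowhere-vanishing function on an interval has constant sign,
hence `f = σ (a t + c)⁻²` with `σ = ±1`. Nonconstancy forces `a ≠ 0`, and the pole `b = -c/a`
lies outside `I` because `a t + c = g t > 0` on `I`.
-/

theorem Real.inv_sq_rpow_neg_one_div_two {x : ℝ} (hx : 0 ≤ x) :
    ((x ^ (-(1:ℝ)/2)) ^ 2)⁻¹ = x := by
  rw [← Real.rpow_natCast, ← Real.rpow_mul hx]
  norm_num [Real.rpow_neg_one]

theorem IsPreconnected.exists_eq_mul_abs_of_ne_zero {α : Type*} [TopologicalSpace α] {S : Set α}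
    {f : α → ℝ} (hS : IsPreconnected S) (hf : ContinuousOn f S) (hf0 : ∀ x ∈ S, f x ≠ 0) :
    ∃ σ : ℝ, (σ = 1 ∨ σ = -1) ∧ ∀ x ∈ S, f x = σ * |f x| := by
  rcases hS.eq_or_eq_neg_of_sq_eq hf hf.abs (fun x _ => by simp [sq_abs])
    (fun hx => abs_ne_zero.2 (hf0 _ hx)) with h | h
  · exact ⟨1, .inl rfl, fun x hx => by simpa using h hx⟩
  · exact ⟨-1, .inr rfl, fun x hx => by simpa using h hx⟩

theorem IsOpen.exists_eq_mul_add_of_deriv_deriv_eq_zero {s : Set ℝ} {g : ℝ → ℝ}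
    (hs : IsOpen s) (hs' : IsPreconnected s) (hg : ContDiffOn ℝ 2 g s)
    (hg'' : Set.EqOn (deriv (deriv g)) 0 s) : ∃ a c : ℝ, ∀ t ∈ s, g t = a * t + c := by
  have hg' : ContDiffOn ℝ 1 (deriv g) s := hg.deriv_of_isOpen hs (by norm_num)
  obtain ⟨a, ha⟩ :=
    hs.exists_is_const_of_deriv_eq_zero hs' (hg'.differentiableOn one_ne_zero) hg''
  obtain ⟨c, hc⟩ := hs.exists_eq_add_of_deriv_eq hs' (hg.differentiableOn two_ne_zero)
    (differentiableOn_id.const_mul a) fun t ht => by simp [ha t ht]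
  exact ⟨a, c, hc⟩

theorem stmt11_general (I : Set ℝ) (hIopen : IsOpen I) (hIint : I.OrdConnected)
    (f : ℝ → ℝ)
    (hC2 : ContDiffOn ℝ 2 f I)
    (hnz : ∀ t ∈ I, f t ≠ 0)
    (hnc : ¬ ∀ t ∈ I, ∀ s ∈ I, f t = f s)
    (hlin : ∀ t ∈ I, deriv (deriv fun s => |f s| ^ (-(1:ℝ)/2)) t = 0) :
    ∃ ε b : ℝ, ε ≠ 0 ∧ b ∉ I ∧ ∀ t ∈ I, f t = ε * ((t - b) ^ 2)⁻¹ := by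
  have hG : ContDiffOn ℝ 2 (fun s => |f s| ^ (-(1:ℝ)/2)) I :=
    (hC2.abs hnz).rpow_const_of_ne fun t ht => abs_ne_zero.2 (hnz t ht)
  obtain ⟨a, c, hac⟩ :=
    hIopen.exists_eq_mul_add_of_deriv_deriv_eq_zero hIint.isPreconnected hG hlin
  have hpos : ∀ t ∈ I, 0 < a * t + c := fun t ht =>
    hac t ht ▸ Real.rpow_pos_of_pos (abs_pos.2 (hnz t ht)) _
  have habs : ∀ t ∈ I, |f t| = ((a * t + c) ^ 2)⁻¹ := fun t ht => by
    rw [← hac t ht, Real.inv_sq_rpow_neg_one_div_two (abs_nonneg _)]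
  obtain ⟨σ, hσ, hfσ⟩ := hIint.isPreconnected.exists_eq_mul_abs_of_ne_zero hC2.continuousOn hnz
  have ha : a ≠ 0 := by
    rintro rfl
    exact hnc fun t ht s hs => by rw [hfσ t ht, hfσ s hs, habs t ht, habs s hs]; simp
  refine ⟨σ / a ^ 2, -c / a, by rcases hσ with rfl | rfl <;> positivity,
    fun hb => ?_, fun t ht => ?_⟩
  · exact (hpos _ hb).ne' (by field_simp; ring)
  · rw [hfσ t ht, habs t ht]
    field_simp
    ring

/-- If `f` is a nonconstant, nowhere-vanishing `C²` function on an open interval `I`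
with `(|f|^{-1/2})'' = 0` on `I`, then `f(t) = ε (t - b)⁻²` on `I` for some
constants `ε ≠ 0` and `b ∉ I`. -/
theorem stmt11 (I : Set ℝ) (hIopen : IsOpen I) (hIint : I.OrdConnected)
    (hIne : I.Nonempty) (f : ℝ → ℝ)
    (hC2 : ContDiffOn ℝ 2 f I)
    (hnz : ∀ t ∈ I, f t ≠ 0)
    (hnc : ¬ ∀ t ∈ I, ∀ s ∈ I, f t = f s)
    (hlin : ∀ t ∈ I, deriv (deriv fun s => |f s| ^ (-(1:ℝ)/2)) t = 0) :
    ∃ ε b : ℝ, ε ≠ 0 ∧ b ∉ I ∧ ∀ t ∈ I, f t = ε * ((t - b) ^ 2)⁻¹ :=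
  stmt11_general I hIopen hIint f hC2 hnz hnc hlin
end

section
/- Let u be a complete C¹ vector field with flow φ on a connected smooth manifold N, and χ : N → ℝ a C¹ function with dχ(u) = 1 everywhere. Let L = χ⁻¹(c) be a level set of χ for some c in the range of χ. Then the restriction φ : ℝ × L → N is a bijection. -/
open scoped Manifold

/-!
Along every flow line `χ` grows at unit speed, `χ (φ t x) = χ x + t`. Hence the time needed to
reach `z` from `L` is forced to be `χ z - c`, and `φ (c - χ z) z` is the unique point of `L` on the
flow line of `z`.
-/

section Flow

variable {N : Type*} {φ : ℝ → N → N} {χ : N → ℝ}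

theorem bijective_flow_of_levelSet (hφ0 : ∀ x, φ 0 x = x)
    (hφadd : ∀ (s t : ℝ) (x : N), φ (s + t) x = φ s (φ t x))
    (hχφ : ∀ x t, χ (φ t x) = χ x + t) (c : ℝ) :
    Function.Bijective (fun p : ℝ × (χ ⁻¹' {c}) => φ p.1 (p.2 : N)) := by
  constructor
  · rintro ⟨s, x, hx⟩ ⟨t, y, hy⟩ (h : φ s x = φ t y)
    have hst : s = t := by
      have := congrArg χ h
      rw [hχφ, hχφ, hx, hy] at this
      linarith
    subst hst
    have hxy : x = y := by
      simpa only [← hφadd, neg_add_cancel, hφ0] using congrArg (φ (-s)) h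
    subst hxy
    rfl
  · intro z
    refine ⟨⟨χ z - c, φ (c - χ z) z, ?_⟩, ?_⟩
    · simp only [Set.mem_preimage, Set.mem_singleton_iff, hχφ]
      ring
    · simp only [← hφadd, sub_add_sub_cancel', sub_self, hφ0]

end Flow

section IntegralCurve

variable {E : Type*} [NormedAddCommGroup E] [NormedSpace ℝ E]
  {H : Type*} [TopologicalSpace H] {I : ModelWithCorners ℝ E H}
  {M : Type*} [TopologicalSpace M] [ChartedSpace H M]
  {v : (x : M) → TangentSpace I x} {γ : ℝ → M} {f : M → ℝ}

theorem IsMIntegralCurve.hasDerivAt_comp (hγ : IsMIntegralCurve γ v) {t : ℝ}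
    (hf : MDifferentiableAt I 𝓘(ℝ, ℝ) f (γ t)) :
    HasDerivAt (f ∘ γ) (mfderiv I 𝓘(ℝ, ℝ) f (γ t) (v (γ t))) t := by
  have h := hf.hasMFDerivAt.comp t (hγ t)
  rw [hasMFDerivAt_iff_hasFDerivAt] at h
  refine h.congr_fderiv ?_
  ext
  change mfderiv I 𝓘(ℝ, ℝ) f (γ t) ((1 : ℝ) • v (γ t)) = (1 : ℝ) • _
  rw [one_smul, one_smul]

theorem IsMIntegralCurve.comp_eq_add_of_mfderiv_eq_one (hγ : IsMIntegralCurve γ v)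
    (hf : MDifferentiable I 𝓘(ℝ, ℝ) f) (hfv : ∀ x, mfderiv I 𝓘(ℝ, ℝ) f x (v x) = (1 : ℝ))
    (t : ℝ) : f (γ t) = f (γ 0) + t := by
  have hderiv : ∀ τ, HasDerivAt (fun σ => f (γ σ) - σ) 0 τ := fun τ => by
    have hfγ : HasDerivAt (f ∘ γ) 1 τ := by
      simpa only [hfv] using hγ.hasDerivAt_comp (hf (γ τ))
    exact (hfγ.sub (hasDerivAt_id τ)).congr_deriv (sub_self 1)
  have hconst := is_const_of_deriv_eq_zero (fun τ => (hderiv τ).differentiableAt)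
    (fun τ => (hderiv τ).deriv) t 0
  simp only [sub_zero] at hconst
  linarith

end IntegralCurve

theorem stmt17_general {E : Type*} [NormedAddCommGroup E] [NormedSpace ℝ E]
    {H : Type*} [TopologicalSpace H] (I : ModelWithCorners ℝ E H)
    {N : Type*} [TopologicalSpace N] [ChartedSpace H N]
    (u : (x : N) → TangentSpace I x)
    (φ : ℝ → N → N)
    (hφ0 : ∀ x, φ 0 x = x)
    (hφadd : ∀ (s t : ℝ) (x : N), φ (s + t) x = φ s (φ t x))
    (hflow : ∀ x, IsMIntegralCurve (fun τ => φ τ x) u)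
    (χ : N → ℝ) (hχ : ContMDiff I 𝓘(ℝ, ℝ) 1 χ)
    (hdχ : ∀ x, mfderiv I 𝓘(ℝ, ℝ) χ x (u x) = (1 : ℝ))
    (c : ℝ) :
    Function.Bijective (fun p : ℝ × (χ ⁻¹' {c}) => φ p.1 (p.2 : N)) := by
  have hχφ : ∀ x t, χ (φ t x) = χ x + t := fun x t => by
    simpa only [hφ0] using
      (hflow x).comp_eq_add_of_mfderiv_eq_one (hχ.mdifferentiable one_ne_zero) hdχ t
  exact bijective_flow_of_levelSet hφ0 hφadd hχφ c

/-- Let `u` be a complete `C¹` vector field with flow `φ` on a connected manifold `N`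
and `χ : N → ℝ` a `C¹` function with `dχ(u) = 1` everywhere. Then for any value `c` in
the range of `χ`, the restriction of the flow to `ℝ × L`, where `L = χ⁻¹(c)`, is a
bijection onto `N`. -/
theorem stmt17 {E : Type*} [NormedAddCommGroup E] [NormedSpace ℝ E]
    {H : Type*} [TopologicalSpace H] (I : ModelWithCorners ℝ E H)
    {N : Type*} [TopologicalSpace N] [ChartedSpace H N]
    [IsManifold I (⊤ : ℕ∞) N] [ConnectedSpace N]
    (u : (x : N) → TangentSpace I x)
    (φ : ℝ → N → N)
    (hφ0 : ∀ x, φ 0 x = x)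
    (hφadd : ∀ (s t : ℝ) (x : N), φ (s + t) x = φ s (φ t x))
    (hflow : ∀ x, IsMIntegralCurve (fun τ => φ τ x) u)
    (χ : N → ℝ) (hχ : ContMDiff I 𝓘(ℝ, ℝ) 1 χ)
    (hdχ : ∀ x, mfderiv I 𝓘(ℝ, ℝ) χ x (u x) = (1 : ℝ))
    (c : ℝ) (hc : c ∈ Set.range χ) :
    Function.Bijective (fun p : ℝ × (χ ⁻¹' {c}) => φ p.1 (p.2 : N)) :=
  stmt17_general I u φ hφ0 hφadd hflow χ hχ hdχ c
end
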